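/- arXiv:1804.01207 — 3 statements merged into one kernel-verified Lean document; each statement's English description precedes it below -/
import Mathlib

section
/- (Round trip lemma, part 1) Let N ≥ 1, let A be a finite alphabet, and let C : ZMod N → A be a cycle. For every symbol a in the range of C, the sum of the distances Δ_C(j) over all positions j with C(j) = a equals N; that is, ∑_{j : C(j) = a} Δ_C(j) = N. -/
/-!
Each position `k` of the cycle is reached from exactly one occurrence `j` of `a` in the form
`k = j + t` with `0 < t ≤ Δ(j)`: the occurrence is the last one strictly before `k`, since
between `j` and `j + Δ(j)` there is no other occurrence of `a`. Hence the arcs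
`(j, j + Δ(j)]` over the occurrences `j` of `a` partition the cycle, and their lengths add up
to `N`.
-/

open Finset

/-- The distance from position `j` to the next occurrence of the same symbol:
the least positive `d` with `C (j + d) = C j`. -/
noncomputable def cycleDist {N : ℕ} {A : Type*} (C : ZMod N → A) (j : ZMod N) : ℕ :=
  sInf {d : ℕ | 0 < d ∧ C (j + (d : ZMod N)) = C j}

/-- A cycle is admissible for multiplicities `m` if every fiber has the prescribed size. -/
def Admissible {N : ℕ} [NeZero N] {A : Type*} [Fintype A] [DecidableEq A]
    (m : A → ℕ) (C : ZMod N → A) : Prop :=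
  ∀ a : A, (Finset.univ.filter (fun j => C j = a)).card = m a

/-- The mean of a cycle. -/
noncomputable def cycleMean {N : ℕ} [NeZero N] {A : Type*} (C : ZMod N → A) : ℚ :=
  (∑ j : ZMod N, (cycleDist C j : ℚ)) / N

/-- The second (raw) moment of a cycle. -/
noncomputable def cycleMoment2 {N : ℕ} [NeZero N] {A : Type*} (C : ZMod N → A) : ℚ :=
  (∑ j : ZMod N, (cycleDist C j : ℚ) ^ 2) / N

/-- The variance of a cycle. -/
noncomputable def cycleVariance {N : ℕ} [NeZero N] {A : Type*} (C : ZMod N → A) : ℚ :=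
  (∑ j : ZMod N, ((cycleDist C j : ℚ) - cycleMean C) ^ 2) / N

section CycleDist

variable {N : ℕ} {A : Type*} (C : ZMod N → A)

theorem cycleDist_pos_and_apply_add [NeZero N] (j : ZMod N) :
    0 < cycleDist C j ∧ C (j + (cycleDist C j : ZMod N)) = C j :=
  Nat.sInf_mem (s := {d : ℕ | 0 < d ∧ C (j + (d : ZMod N)) = C j})
    ⟨N, NeZero.pos N, by simp⟩

theorem cycleDist_le {j : ZMod N} {d : ℕ} (hd : 0 < d) (h : C (j + (d : ZMod N)) = C j) :
    cycleDist C j ≤ d :=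
  Nat.sInf_le ⟨hd, h⟩

theorem le_of_add_eq_add_of_le_cycleDist {j j' : ZMod N} {t t' : ℕ} (hC : C j = C j')
    (ht : 0 < t) (ht' : t' ≤ cycleDist C j') (h : j + (t : ZMod N) = j' + (t' : ZMod N)) :
    t' ≤ t := by
  by_contra! hlt
  have hshift : j' + ((t' - t : ℕ) : ZMod N) = j := by
    rw [Nat.cast_sub hlt.le]
    linear_combination -h
  have := cycleDist_le C (Nat.sub_pos_of_lt hlt) (hshift ▸ hC)
  omega

theorem eq_of_add_eq_add_of_le_cycleDist {j j' : ZMod N} {t t' : ℕ} (hC : C j = C j')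
    (ht : 0 < t) (ht_le : t ≤ cycleDist C j) (ht' : 0 < t') (ht'_le : t' ≤ cycleDist C j')
    (h : j + (t : ZMod N) = j' + (t' : ZMod N)) : t = t' :=
  le_antisymm (le_of_add_eq_add_of_le_cycleDist C hC.symm ht' ht_le h.symm)
    (le_of_add_eq_add_of_le_cycleDist C hC ht ht'_le h)

theorem exists_sub_eq_of_mem_range [NeZero N] {a : A} (ha : a ∈ Set.range C) (k : ZMod N) :
    ∃ t : ℕ, 0 < t ∧ t ≤ cycleDist C (k - t) ∧ C (k - t) = a := by
  classical
  obtain ⟨j₀, rfl⟩ := ha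
  have hex : ∃ t : ℕ, 0 < t ∧ C (k - t) = C j₀ := by
    refine ⟨(k - j₀).val + N, Nat.add_pos_right _ (NeZero.pos N), ?_⟩
    simp
  set t := Nat.find hex
  obtain ⟨ht, hC⟩ : 0 < t ∧ C (k - t) = C j₀ := Nat.find_spec hex
  refine ⟨t, ht, ?_, hC⟩
  -- otherwise the occurrence `k - t + Δ(k - t)` of the symbol would be closer to `k`
  by_contra! hlt
  obtain ⟨hd, hdC⟩ := cycleDist_pos_and_apply_add C (k - (t : ZMod N))
  refine Nat.find_min hex (Nat.sub_lt ht hd) ⟨Nat.sub_pos_of_lt hlt, ?_⟩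
  have hshift : k - ((t - cycleDist C (k - t) : ℕ) : ZMod N) = k - t + cycleDist C (k - t) := by
    rw [Nat.cast_sub hlt.le]
    ring
  rw [hshift, hdC, hC]

end CycleDist

theorem round_trip_part1_general {N : ℕ} [NeZero N] {A : Type*} [DecidableEq A]
    (C : ZMod N → A) (a : A) (ha : a ∈ Set.range C) :
    ∑ j ∈ Finset.univ.filter (fun j => C j = a), cycleDist C j = N := by
  calc ∑ j ∈ univ.filter (fun j => C j = a), cycleDist C j
      = #((univ.filter fun j => C j = a).sigma fun j => Ioc 0 (cycleDist C j)) := by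
        simp [card_sigma]
    _ = #(univ : Finset (ZMod N)) := by
        refine card_bij (fun p _ => p.1 + (p.2 : ZMod N)) (fun _ _ => mem_univ _) ?_ ?_
        · rintro ⟨j, t⟩ hjt ⟨j', t'⟩ hjt' h
          simp only [mem_sigma, mem_filter, mem_univ, true_and, mem_Ioc] at hjt hjt'
          obtain rfl := eq_of_add_eq_add_of_le_cycleDist C (hjt.1.trans hjt'.1.symm)
            hjt.2.1 hjt.2.2 hjt'.2.1 hjt'.2.2 h
          simpa using h
        · intro k _
          obtain ⟨t, ht, ht_le, hC⟩ := exists_sub_eq_of_mem_range C ha k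
          exact ⟨⟨k - t, t⟩, by simp [ht, ht_le, hC], by simp⟩
    _ = N := by simp

/-- Round trip lemma, part 1: for every symbol attained by the cycle, the distances over
its instances sum to `N`. -/
theorem round_trip_part1 {N : ℕ} [NeZero N] {A : Type*} [Fintype A] [DecidableEq A]
    (C : ZMod N → A) (a : A) (ha : a ∈ Set.range C) :
    ∑ j ∈ Finset.univ.filter (fun j => C j = a), cycleDist C j = N :=
  round_trip_part1_general C a ha
end

section
/- (Impossibility of a single distance under non-divisibility) Let N ≥ 1, let A be a finite alphabet with multiplicities m : A → ℕ satisfying m(a) ≥ 1 for all a and ∑_{a∈A} m(a) = N, and let C : ZMod N → A be an admissible cycle. If a ∈ A is a symbol with m(a) ∤ N, then there is no single value d such that Δ_C(j) = d for all positions j with C(j) = a; at least two distinct distance values must occur among the instances of a. -/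
/-!
The blocks `j, j + 1, …, j + Δ(j) - 1`, for `j` running over the occurrences of a symbol `a`,
partition `ZMod N`: each position lies in the block of the last occurrence of `a` at or before it.
Hence the distances of the `m(a)` occurrences of `a` add up to `N`, and if they were all equal
to `d` we would get `m(a) * d = N`.
-/

open Finset

section CycleDist

variable {N : ℕ} {A : Type*}

lemma cycleDist_set_nonempty [NeZero N] (C : ZMod N → A) (j : ZMod N) :
    {d : ℕ | 0 < d ∧ C (j + (d : ZMod N)) = C j}.Nonempty :=
  ⟨N, NeZero.pos N, by simp⟩

lemma cycleDist_pos [NeZero N] (C : ZMod N → A) (j : ZMod N) : 0 < cycleDist C j :=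
  (Nat.sInf_mem (cycleDist_set_nonempty C j)).1

lemma apply_add_cycleDist [NeZero N] (C : ZMod N → A) (j : ZMod N) :
    C (j + (cycleDist C j : ZMod N)) = C j :=
  (Nat.sInf_mem (cycleDist_set_nonempty C j)).2

lemma apply_add_ne_of_lt_cycleDist (C : ZMod N → A) (j : ZMod N) {t : ℕ} (ht : 0 < t)
    (htd : t < cycleDist C j) : C (j + (t : ZMod N)) ≠ C j :=
  fun h => (Nat.sInf_le ⟨ht, h⟩ : cycleDist C j ≤ t).not_gt htd

lemma eq_and_eq_of_add_eq_add_of_lt_cycleDist {C : ZMod N → A} {j j' : ZMod N} {t t' : ℕ}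
    (hC : C j = C j') (ht' : t' < cycleDist C j') (hle : t ≤ t')
    (h : j + (t : ZMod N) = j' + (t' : ZMod N)) : j = j' ∧ t = t' := by
  obtain rfl | hlt := hle.eq_or_lt
  · exact ⟨add_right_cancel h, rfl⟩
  · have hj : j' + ((t' - t : ℕ) : ZMod N) = j := by
      rw [Nat.cast_sub hle]
      linear_combination -h
    exact (apply_add_ne_of_lt_cycleDist C j' (t := t' - t) (by omega) (by omega) (by rw [hj, hC])).elim

lemma exists_add_eq_of_lt_cycleDist [NeZero N] (C : ZMod N → A) {a : A} (ha : ∃ j, C j = a)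
    (b : ZMod N) : ∃ j : ZMod N, ∃ t : ℕ, C j = a ∧ t < cycleDist C j ∧ j + (t : ZMod N) = b := by
  classical
  have hex : ∃ s : ℕ, C (b - s) = a := by
    obtain ⟨j₀, hj₀⟩ := ha
    exact ⟨(b - j₀).val, by simpa using hj₀⟩
  set s := Nat.find hex
  refine ⟨b - s, s, Nat.find_spec hex, ?_, sub_add_cancel b _⟩
  by_contra! hle
  have hback : b - ((s - cycleDist C (b - s) : ℕ) : ZMod N) = b - s + cycleDist C (b - s) := by
    rw [Nat.cast_sub hle]
    ring
  have hpos := cycleDist_pos C (b - s)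
  exact Nat.find_min hex (m := s - cycleDist C (b - s)) (by omega) (by rw [hback, apply_add_cycleDist C, Nat.find_spec hex])

theorem sum_cycleDist_fiber [NeZero N] [DecidableEq A] (C : ZMod N → A) {a : A}
    (ha : ∃ j, C j = a) : ∑ j ∈ univ.filter (fun j => C j = a), cycleDist C j = N := by
  set S := univ.filter (fun j => C j = a)
  calc ∑ j ∈ S, cycleDist C j = #(S.sigma fun j => range (cycleDist C j)) := by
        simp [card_sigma]
    _ = #(univ : Finset (ZMod N)) := by
        refine card_bij (fun p _ => p.1 + (p.2 : ZMod N)) (by simp) ?_ ?_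
        · rintro ⟨j, t⟩ hjt ⟨j', t'⟩ hjt' h
          simp only [S, mem_sigma, mem_filter, mem_univ, true_and, mem_range] at hjt hjt'
          rcases le_total t t' with hle | hle
          · obtain ⟨rfl, rfl⟩ :=
              eq_and_eq_of_add_eq_add_of_lt_cycleDist (hjt.1.trans hjt'.1.symm) hjt'.2 hle h
            rfl
          · obtain ⟨rfl, rfl⟩ :=
              eq_and_eq_of_add_eq_add_of_lt_cycleDist (hjt'.1.trans hjt.1.symm) hjt.2 hle h.symm
            rfl
        · intro b _
          obtain ⟨j, t, hj, ht, rfl⟩ := exists_add_eq_of_lt_cycleDist C ha b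
          exact ⟨⟨j, t⟩, by simp [S, hj, ht], rfl⟩
    _ = N := by simp

end CycleDist

theorem no_single_distance_general {N : ℕ} [NeZero N] {A : Type*} [Fintype A] [DecidableEq A]
    (m : A → ℕ) (hm : ∀ a, 1 ≤ m a)
    (C : ZMod N → A) (hC : Admissible m C) (a : A) (hndvd : ¬ m a ∣ N) :
    (¬ ∃ d : ℕ, ∀ j : ZMod N, C j = a → cycleDist C j = d) ∧
    ∃ j j' : ZMod N, C j = a ∧ C j' = a ∧ cycleDist C j ≠ cycleDist C j' := by
  obtain ⟨j₀, hj₀⟩ : ∃ j, C j = a := by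
    obtain ⟨j, hj⟩ := card_pos.mp ((hC a).symm ▸ hm a : 0 < #(univ.filter fun j => C j = a))
    exact ⟨j, (mem_filter.mp hj).2⟩
  have not_const : ¬ ∃ d : ℕ, ∀ j : ZMod N, C j = a → cycleDist C j = d := by
    rintro ⟨d, hd⟩
    refine hndvd ⟨d, ?_⟩
    rw [← sum_cycleDist_fiber C ⟨j₀, hj₀⟩, sum_congr rfl fun j hj => hd j (mem_filter.mp hj).2,
      sum_const, hC a, smul_eq_mul]
  refine ⟨not_const, ?_⟩
  by_contra! h
  exact not_const ⟨cycleDist C j₀, fun j hj => h j j₀ hj hj₀⟩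

/-- If `m a ∤ N`, no single distance value can serve all instances of `a`:
at least two distinct distance values occur. -/
theorem no_single_distance {N : ℕ} [NeZero N] {A : Type*} [Fintype A] [DecidableEq A]
    (m : A → ℕ) (hm : ∀ a, 1 ≤ m a) (hsum : ∑ a, m a = N)
    (C : ZMod N → A) (hC : Admissible m C) (a : A) (hndvd : ¬ m a ∣ N) :
    (¬ ∃ d : ℕ, ∀ j : ZMod N, C j = a → cycleDist C j = d) ∧
    ∃ j j' : ZMod N, C j = a ∧ C j' = a ∧ cycleDist C j ≠ cycleDist C j' :=
  no_single_distance_general m hm C hC a hndvd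
end

section
/- (Existence of a binary cycle with the less abundant symbol unclustered) Let m₁ ≥ m₂ ≥ 1 be natural numbers and N = m₁ + m₂. Then there exists an admissible cycle C : ZMod N → {a₁, a₂} with fibers of sizes m₁ and m₂ such that every instance of the less abundant symbol a₂ is unclustered, i.e., Δ_C(j) ≥ 2 for every position j with C(j) = a₂. -/
/-!
Put the `m₂` copies of `a₂` at the even positions `0, 2, …, 2(m₂ - 1)`. Since `2 m₂ ≤ N`, these
positions are distinct in `ZMod N` and the successor of each one is an odd position below `N`,
hence carries `a₁`; a symbol followed by a different one has distance at least `2`.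
-/

open Finset

lemma two_le_cycleDist {N : ℕ} [NeZero N] {A : Type*} {C : ZMod N → A} {j : ZMod N}
    (h : C (j + 1) ≠ C j) : 2 ≤ cycleDist C j := by
  refine le_csInf ⟨N, Nat.pos_of_neZero N, by simp⟩ fun d ⟨hd, hdC⟩ => ?_
  obtain rfl | hd1 : d = 1 ∨ 1 < d := by omega
  · exact absurd (by simpa using hdC) h
  · exact hd1

lemma admissible_fin_two_iff {N m₁ m₂ : ℕ} [NeZero N] (hN : N = m₁ + m₂) {C : ZMod N → Fin 2} :
    Admissible ![m₁, m₂] C ↔ #{j | C j = 1} = m₂ := by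
  have hsplit : #{j | C j = 1} + #{j | ¬C j = 1} = N := by
    rw [card_filter_add_card_filter_not, card_univ, ZMod.card]
  have hzero : ∀ j, C j = 0 ↔ ¬C j = 1 := fun j => by generalize C j = c; fin_cases c <;> simp
  simp only [Admissible, Fin.forall_fin_two, Matrix.cons_val_zero, Matrix.cons_val_one,
    Matrix.cons_val_fin_one, hzero]
  omega

lemma ZMod.eq_of_natCast_eq_of_lt {N a b : ℕ} (ha : a < N) (hb : b < N) (h : (a : ZMod N) = b) :
    a = b := by
  rwa [ZMod.natCast_eq_natCast_iff', Nat.mod_eq_of_lt ha, Nat.mod_eq_of_lt hb] at h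

def spreadCycle (N k : ℕ) : ZMod N → Fin 2 := fun j =>
  if j ∈ (range k).image (fun i => ((2 * i : ℕ) : ZMod N)) then 1 else 0

section spreadCycle

variable {N k : ℕ}

lemma spreadCycle_eq_one_iff {j : ZMod N} :
    spreadCycle N k j = 1 ↔ ∃ i < k, ((2 * i : ℕ) : ZMod N) = j := by
  simp [spreadCycle]

lemma card_spreadCycle_eq_one [NeZero N] (h : 2 * k ≤ N) : #{j | spreadCycle N k j = 1} = k := by
  have hfiber : ({j | spreadCycle N k j = 1} : Finset (ZMod N)) =
      (range k).image (fun i => ((2 * i : ℕ) : ZMod N)) := by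
    ext j; simp [spreadCycle_eq_one_iff]
  rw [hfiber, card_image_of_injOn, card_range]
  intro a ha b hb hab
  simp only [coe_range, Set.mem_Iio] at ha hb
  have := ZMod.eq_of_natCast_eq_of_lt (by omega) (by omega) hab
  omega

lemma spreadCycle_add_one_ne (h : 2 * k ≤ N) {j : ZMod N} (hj : spreadCycle N k j = 1) :
    spreadCycle N k (j + 1) ≠ 1 := by
  rw [spreadCycle_eq_one_iff] at hj
  rw [Ne, spreadCycle_eq_one_iff]
  rintro ⟨i', hi', hji'⟩
  obtain ⟨i, hi, rfl⟩ := hj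
  have hcast : ((2 * i + 1 : ℕ) : ZMod N) = ((2 * i' : ℕ) : ZMod N) := by
    push_cast at hji' ⊢
    exact hji'.symm
  have := ZMod.eq_of_natCast_eq_of_lt (by omega) (by omega) hcast
  omega

end spreadCycle

theorem exists_unclustered_binary_general (m₁ m₂ : ℕ) (h12 : m₂ ≤ m₁)
    (N : ℕ) (hN : N = m₁ + m₂) [NeZero N] :
    ∃ C : ZMod N → Fin 2, Admissible ![m₁, m₂] C ∧
      ∀ j : ZMod N, C j = 1 → 2 ≤ cycleDist C j := by
  have h : 2 * m₂ ≤ N := by omega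
  refine ⟨spreadCycle N m₂, (admissible_fin_two_iff hN).2 (card_spreadCycle_eq_one h),
    fun j hj => two_le_cycleDist ?_⟩
  rw [hj]
  exact spreadCycle_add_one_ne h hj

/-- Existence of an admissible binary cycle in which every instance of the less abundant
symbol `a₂` is unclustered. -/
theorem exists_unclustered_binary (m₁ m₂ : ℕ) (h2 : 1 ≤ m₂) (h12 : m₂ ≤ m₁)
    (N : ℕ) (hN : N = m₁ + m₂) [NeZero N] :
    ∃ C : ZMod N → Fin 2, Admissible ![m₁, m₂] C ∧
      ∀ j : ZMod N, C j = 1 → 2 ≤ cycleDist C j :=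
  exists_unclustered_binary_general m₁ m₂ h12 N hN
end
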